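/- (Proposition 1, minimizer equivalence.) Under the hypotheses of the completion-of-squares identity — continuous A : [t0,t1] → ℝ^{n×n}, B̂ : [t0,t1] → ℝ^{n×m}, symmetric continuous Q : [t0,t1] → ℝ^{n×n}, and a differentiable symmetric K : [t0,t1] → ℝ^{n×n} solving K' = −AᵀK − KA + KB̂B̂ᵀK − Q with K(t1) = K1 — let (z1,u1) and (z2,u2) be two admissible pairs for the dynamics z' = Az + B̂u with the same endpoints z(t0) = x, z(t1) = y, and set vᵢ(τ) := uᵢ(τ) + B̂(τ)ᵀK(τ)zᵢ(τ) for i = 1,2. Then ∫_{t0}^{t1}((1/2)|u1|² + (1/2)z1ᵀQz1)dτ ≤ ∫_{t0}^{t1}((1/2)|u2|² + (1/2)z2ᵀQz2)dτ if and only if ∫_{t0}^{t1}(1/2)|v1|²dτ ≤ ∫_{t0}^{t1}(1/2)|v2|²dτ. In particular, an admissible trajectory minimizes the cost ∫((1/2)|u|² + (1/2)zᵀQz)dτ if and only if it minimizes the transformed cost ∫(1/2)|v|²dτ. -/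

import Mathlib

/-!
Along an admissible pair, `d/dτ (zᵀ K z) = (Az + B̂u)ᵀ K z + zᵀ K' z + zᵀ K (Az + B̂u)`, and
substituting the Riccati equation for `K'` turns this into `|u + B̂ᵀ K z|² - |u|² - zᵀ Q z`.
Integrating, the transformed cost `∫ ½|v|²` equals the original cost plus the boundary term
`½ yᵀ K(t1) y - ½ xᵀ K(t0) x`, which is the same for all admissible pairs with endpoints `x, y`.
So the two costs differ by a constant and order admissible pairs in the same way.
-/

open MeasureTheory Matrix

attribute [local instance] Matrix.normedAddCommGroup Matrix.normedSpace

/-- An admissible pair for the linear time-varying dynamics `(A, B̂)` with endpoints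
`x, y` on `[t0, t1]`: a continuously differentiable trajectory `z` and continuous
control `u` with `z' = A z + B̂ u`, `z(t0) = x`, `z(t1) = y`. -/
def Admissible (n m : ℕ) (t0 t1 : ℝ)
    (A : ℝ → Matrix (Fin n) (Fin n) ℝ) (B : ℝ → Matrix (Fin n) (Fin m) ℝ)
    (x y : Fin n → ℝ) (z : ℝ → Fin n → ℝ) (u : ℝ → Fin m → ℝ) : Prop :=
  ContinuousOn u (Set.Icc t0 t1) ∧
  (∀ τ ∈ Set.Icc t0 t1,
    HasDerivWithinAt z (A τ *ᵥ z τ + B τ *ᵥ u τ) (Set.Icc t0 t1) τ) ∧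
  z t0 = x ∧ z t1 = y

section Continuity

variable {X R : Type*} [TopologicalSpace X] [TopologicalSpace R] {s : Set X} {l m : Type*}

theorem ContinuousOn.matrix_transpose {M : X → Matrix l m R} (hM : ContinuousOn M s) :
    ContinuousOn (fun x => (M x)ᵀ) s :=
  continuous_id.matrix_transpose.comp_continuousOn hM

variable [Fintype m]

theorem ContinuousOn.dotProduct [Mul R] [AddCommMonoid R] [ContinuousAdd R] [ContinuousMul R]
    {f g : X → m → R} (hf : ContinuousOn f s) (hg : ContinuousOn g s) :
    ContinuousOn (fun x => f x ⬝ᵥ g x) s :=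
  (continuous_fst.dotProduct continuous_snd).comp_continuousOn (hf.prodMk hg)

theorem ContinuousOn.matrix_mulVec [NonUnitalNonAssocSemiring R] [ContinuousAdd R]
    [ContinuousMul R] {M : X → Matrix l m R} {f : X → m → R}
    (hM : ContinuousOn M s) (hf : ContinuousOn f s) :
    ContinuousOn (fun x => M x *ᵥ f x) s :=
  (continuous_fst.matrix_mulVec continuous_snd).comp_continuousOn (hM.prodMk hf)

end Continuity

section Derivatives

variable {𝕜 : Type*} [NontriviallyNormedField 𝕜] {s : Set 𝕜} {t : 𝕜}
  {l m : Type*} [Fintype m]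

theorem HasDerivWithinAt.dotProduct {f g : 𝕜 → m → 𝕜} {f' g' : m → 𝕜}
    (hf : HasDerivWithinAt f f' s t) (hg : HasDerivWithinAt g g' s t) :
    HasDerivWithinAt (fun t => f t ⬝ᵥ g t) (f' ⬝ᵥ g t + f t ⬝ᵥ g') s t := by
  have hsum := HasDerivWithinAt.fun_sum (u := Finset.univ) fun i _ =>
    (hasDerivWithinAt_pi.mp hf i).fun_mul (hasDerivWithinAt_pi.mp hg i)
  rw [Finset.sum_add_distrib] at hsum
  exact hsum

theorem HasDerivWithinAt.matrix_mulVec {M : 𝕜 → Matrix l m 𝕜} {M' : Matrix l m 𝕜}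
    {f : 𝕜 → m → 𝕜} {f' : m → 𝕜}
    (hM : HasDerivWithinAt M M' s t) (hf : HasDerivWithinAt f f' s t) :
    HasDerivWithinAt (fun t => M t *ᵥ f t) (M' *ᵥ f t + M t *ᵥ f') s t :=
  hasDerivWithinAt_pi.mpr fun i => (hasDerivWithinAt_pi.mp hM i).dotProduct hf

end Derivatives

theorem Matrix.riccati_completion_of_squares {R ι κ : Type*} [CommRing R]
    [Fintype ι] [Fintype κ] (A Q K : Matrix ι ι R) (B : Matrix ι κ R) (hK : K.IsSymm)
    (z : ι → R) (u : κ → R) :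
    (u + Bᵀ *ᵥ (K *ᵥ z)) ⬝ᵥ (u + Bᵀ *ᵥ (K *ᵥ z))
      = u ⬝ᵥ u + z ⬝ᵥ Q *ᵥ z
        + ((A *ᵥ z + B *ᵥ u) ⬝ᵥ K *ᵥ z
          + z ⬝ᵥ (-Aᵀ * K - K * A + K * B * Bᵀ * K - Q) *ᵥ z
          + z ⬝ᵥ K *ᵥ (A *ᵥ z + B *ᵥ u)) := by
  have hKt : Kᵀ = K := hK
  have hBu : u ⬝ᵥ Bᵀ *ᵥ (K *ᵥ z) = B *ᵥ u ⬝ᵥ K *ᵥ z := by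
    rw [dotProduct_transpose_mulVec, dotProduct_comm]
  have hKBu : z ⬝ᵥ K *ᵥ (B *ᵥ u) = B *ᵥ u ⬝ᵥ K *ᵥ z := by
    rw [← dotProduct_transpose_mulVec, hKt]
  have hBK : Bᵀ *ᵥ (K *ᵥ z) ⬝ᵥ Bᵀ *ᵥ (K *ᵥ z) = z ⬝ᵥ (K * B * Bᵀ * K) *ᵥ z := by
    rw [← mulVec_mulVec, ← mulVec_mulVec, ← mulVec_mulVec, dotProduct_transpose_mulVec,
      ← dotProduct_transpose_mulVec K, hKt, dotProduct_comm]
  have hAK : A *ᵥ z ⬝ᵥ K *ᵥ z = z ⬝ᵥ (Aᵀ * K) *ᵥ z := by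
    rw [← mulVec_mulVec, dotProduct_transpose_mulVec, dotProduct_comm]
  have hKA : z ⬝ᵥ K *ᵥ (A *ᵥ z) = z ⬝ᵥ (K * A) *ᵥ z := by
    rw [mulVec_mulVec]
  simp only [dotProduct_add, add_dotProduct, mulVec_add, sub_mulVec, add_mulVec,
    dotProduct_sub, neg_mul, neg_mulVec, dotProduct_neg]
  linear_combination 2 * hBu + hBK - hKBu - hAK - hKA + dotProduct_comm (Bᵀ *ᵥ (K *ᵥ z)) u

open Set in
theorem Admissible.integral_feedback_cost_eq {n m : ℕ} {t0 t1 : ℝ}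
    {A Q K : ℝ → Matrix (Fin n) (Fin n) ℝ} {B : ℝ → Matrix (Fin n) (Fin m) ℝ}
    {x y : Fin n → ℝ} {z : ℝ → Fin n → ℝ} {u : ℝ → Fin m → ℝ}
    (hadm : Admissible n m t0 t1 A B x y z u) (h : t0 ≤ t1)
    (hB : ContinuousOn B (Icc t0 t1)) (hQ : ContinuousOn Q (Icc t0 t1))
    (hKsymm : ∀ τ ∈ Icc t0 t1, (K τ).IsSymm)
    (hK : ∀ τ ∈ Icc t0 t1,
      HasDerivWithinAt K
        (-(A τ)ᵀ * K τ - K τ * A τ + K τ * B τ * (B τ)ᵀ * K τ - Q τ) (Icc t0 t1) τ) :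
    ∫ τ in t0..t1, (1/2) * ((u τ + (B τ)ᵀ *ᵥ (K τ *ᵥ z τ)) ⬝ᵥ (u τ + (B τ)ᵀ *ᵥ (K τ *ᵥ z τ)))
      = (∫ τ in t0..t1, ((1/2) * (u τ ⬝ᵥ u τ) + (1/2) * (z τ ⬝ᵥ Q τ *ᵥ z τ)))
        + ((1/2) * (y ⬝ᵥ K t1 *ᵥ y) - (1/2) * (x ⬝ᵥ K t0 *ᵥ x)) := by
  obtain ⟨hu, hz, rfl, rfl⟩ := hadm
  have hzc : ContinuousOn z (Icc t0 t1) := fun τ hτ => (hz τ hτ).continuousWithinAt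
  have hKc : ContinuousOn K (Icc t0 t1) := fun τ hτ => (hK τ hτ).continuousWithinAt
  have hv : ContinuousOn (fun τ => u τ + (B τ)ᵀ *ᵥ (K τ *ᵥ z τ)) (Icc t0 t1) :=
    hu.add (hB.matrix_transpose.matrix_mulVec (hKc.matrix_mulVec hzc))
  have hfeedback : IntervalIntegrable (fun τ => (1/2) *
      ((u τ + (B τ)ᵀ *ᵥ (K τ *ᵥ z τ)) ⬝ᵥ (u τ + (B τ)ᵀ *ᵥ (K τ *ᵥ z τ)))) volume t0 t1 :=
    (continuousOn_const.mul (hv.dotProduct hv)).intervalIntegrable_of_Icc h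
  have hcost : IntervalIntegrable (fun τ => (1/2) * (u τ ⬝ᵥ u τ) + (1/2) * (z τ ⬝ᵥ Q τ *ᵥ z τ))
      volume t0 t1 :=
    ((continuousOn_const.mul (hu.dotProduct hu)).add (continuousOn_const.mul
      (hzc.dotProduct (hQ.matrix_mulVec hzc)))).intervalIntegrable_of_Icc h
  have hderiv : ∀ τ ∈ Icc t0 t1, HasDerivWithinAt (fun t => (1/2) * (z t ⬝ᵥ K t *ᵥ z t))
      ((1/2) * ((u τ + (B τ)ᵀ *ᵥ (K τ *ᵥ z τ)) ⬝ᵥ (u τ + (B τ)ᵀ *ᵥ (K τ *ᵥ z τ)))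
        - ((1/2) * (u τ ⬝ᵥ u τ) + (1/2) * (z τ ⬝ᵥ Q τ *ᵥ z τ))) (Icc t0 t1) τ := by
    intro τ hτ
    refine (((hz τ hτ).dotProduct ((hK τ hτ).matrix_mulVec (hz τ hτ))).const_mul
      (1/2 : ℝ)).congr_deriv ?_
    rw [riccati_completion_of_squares (A τ) (Q τ) _ _ (hKsymm τ hτ),
      dotProduct_add]
    ring
  have hftc := intervalIntegral.integral_eq_sub_of_hasDerivAt_of_le h
    (fun τ hτ => (hderiv τ hτ).continuousWithinAt)
    (fun τ hτ => (hderiv τ (Ioo_subset_Icc_self hτ)).hasDerivAt (Icc_mem_nhds hτ.1 hτ.2))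
    (hfeedback.sub hcost)
  rw [intervalIntegral.integral_sub hfeedback hcost] at hftc
  linarith

theorem stmt_4_general (n m : ℕ) (t0 t1 : ℝ) (h : t0 < t1)
    (A Q : ℝ → Matrix (Fin n) (Fin n) ℝ) (B : ℝ → Matrix (Fin n) (Fin m) ℝ)
    (hB : ContinuousOn B (Set.Icc t0 t1))
    (hQ : ContinuousOn Q (Set.Icc t0 t1))
    (K : ℝ → Matrix (Fin n) (Fin n) ℝ)
    (hKsymm : ∀ τ ∈ Set.Icc t0 t1, (K τ).IsSymm)
    (hK : ∀ τ ∈ Set.Icc t0 t1,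
      HasDerivWithinAt K
        (-(A τ)ᵀ * K τ - K τ * A τ + K τ * B τ * (B τ)ᵀ * K τ - Q τ)
        (Set.Icc t0 t1) τ)
    (x y : Fin n → ℝ)
    (z1 z2 : ℝ → Fin n → ℝ) (u1 u2 : ℝ → Fin m → ℝ)
    (h1 : Admissible n m t0 t1 A B x y z1 u1)
    (h2 : Admissible n m t0 t1 A B x y z2 u2)
    (v1 v2 : ℝ → Fin m → ℝ)
    (hv1 : v1 = fun τ => u1 τ + (B τ)ᵀ *ᵥ (K τ *ᵥ z1 τ))
    (hv2 : v2 = fun τ => u2 τ + (B τ)ᵀ *ᵥ (K τ *ᵥ z2 τ)) :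
    ((∫ τ in t0..t1, ((1/2) * (u1 τ ⬝ᵥ u1 τ) + (1/2) * (z1 τ ⬝ᵥ Q τ *ᵥ z1 τ)))
        ≤ (∫ τ in t0..t1, ((1/2) * (u2 τ ⬝ᵥ u2 τ) + (1/2) * (z2 τ ⬝ᵥ Q τ *ᵥ z2 τ)))
      ↔ (∫ τ in t0..t1, (1/2) * (v1 τ ⬝ᵥ v1 τ))
        ≤ (∫ τ in t0..t1, (1/2) * (v2 τ ⬝ᵥ v2 τ))) ∧
    ((∀ z u, Admissible n m t0 t1 A B x y z u →
        (∫ τ in t0..t1, ((1/2) * (u1 τ ⬝ᵥ u1 τ) + (1/2) * (z1 τ ⬝ᵥ Q τ *ᵥ z1 τ)))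
          ≤ (∫ τ in t0..t1, ((1/2) * (u τ ⬝ᵥ u τ) + (1/2) * (z τ ⬝ᵥ Q τ *ᵥ z τ))))
      ↔ (∀ z u, Admissible n m t0 t1 A B x y z u →
        (∫ τ in t0..t1, (1/2) * (v1 τ ⬝ᵥ v1 τ))
          ≤ (∫ τ in t0..t1, (1/2) *
              ((u τ + (B τ)ᵀ *ᵥ (K τ *ᵥ z τ)) ⬝ᵥ (u τ + (B τ)ᵀ *ᵥ (K τ *ᵥ z τ)))))) := by
  subst hv1 hv2
  have hshift {z u} (hadm : Admissible n m t0 t1 A B x y z u) :=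
    hadm.integral_feedback_cost_eq h.le hB hQ hKsymm hK
  refine ⟨?_, forall₂_congr fun z u => imp_congr_right fun hadm => ?_⟩
  · rw [hshift h1, hshift h2, add_le_add_iff_right]
  · rw [hshift h1, hshift hadm, add_le_add_iff_right]

/-- Proposition 1 (minimizer equivalence): under the Riccati completion-of-squares
hypotheses, for two admissible pairs with the same endpoints, the original quadratic
costs compare exactly as the transformed costs `∫ (1/2)|v|²` do; in particular an
admissible pair minimizes the original cost iff it minimizes the transformed cost. -/
theorem stmt_4 (n m : ℕ) (t0 t1 : ℝ) (h : t0 < t1)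
    (A Q : ℝ → Matrix (Fin n) (Fin n) ℝ) (B : ℝ → Matrix (Fin n) (Fin m) ℝ)
    (hA : ContinuousOn A (Set.Icc t0 t1)) (hB : ContinuousOn B (Set.Icc t0 t1))
    (hQ : ContinuousOn Q (Set.Icc t0 t1))
    (hQsymm : ∀ τ ∈ Set.Icc t0 t1, (Q τ).IsSymm)
    (K : ℝ → Matrix (Fin n) (Fin n) ℝ) (K1 : Matrix (Fin n) (Fin n) ℝ)
    (hKsymm : ∀ τ ∈ Set.Icc t0 t1, (K τ).IsSymm)
    (hK : ∀ τ ∈ Set.Icc t0 t1,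
      HasDerivWithinAt K
        (-(A τ)ᵀ * K τ - K τ * A τ + K τ * B τ * (B τ)ᵀ * K τ - Q τ)
        (Set.Icc t0 t1) τ)
    (hK1 : K t1 = K1)
    (x y : Fin n → ℝ)
    (z1 z2 : ℝ → Fin n → ℝ) (u1 u2 : ℝ → Fin m → ℝ)
    (h1 : Admissible n m t0 t1 A B x y z1 u1)
    (h2 : Admissible n m t0 t1 A B x y z2 u2)
    (v1 v2 : ℝ → Fin m → ℝ)
    (hv1 : v1 = fun τ => u1 τ + (B τ)ᵀ *ᵥ (K τ *ᵥ z1 τ))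
    (hv2 : v2 = fun τ => u2 τ + (B τ)ᵀ *ᵥ (K τ *ᵥ z2 τ)) :
    ((∫ τ in t0..t1, ((1/2) * (u1 τ ⬝ᵥ u1 τ) + (1/2) * (z1 τ ⬝ᵥ Q τ *ᵥ z1 τ)))
        ≤ (∫ τ in t0..t1, ((1/2) * (u2 τ ⬝ᵥ u2 τ) + (1/2) * (z2 τ ⬝ᵥ Q τ *ᵥ z2 τ)))
      ↔ (∫ τ in t0..t1, (1/2) * (v1 τ ⬝ᵥ v1 τ))
        ≤ (∫ τ in t0..t1, (1/2) * (v2 τ ⬝ᵥ v2 τ))) ∧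
    ((∀ z u, Admissible n m t0 t1 A B x y z u →
        (∫ τ in t0..t1, ((1/2) * (u1 τ ⬝ᵥ u1 τ) + (1/2) * (z1 τ ⬝ᵥ Q τ *ᵥ z1 τ)))
          ≤ (∫ τ in t0..t1, ((1/2) * (u τ ⬝ᵥ u τ) + (1/2) * (z τ ⬝ᵥ Q τ *ᵥ z τ))))
      ↔ (∀ z u, Admissible n m t0 t1 A B x y z u →
        (∫ τ in t0..t1, (1/2) * (v1 τ ⬝ᵥ v1 τ))
          ≤ (∫ τ in t0..t1, (1/2) *
              ((u τ + (B τ)ᵀ *ᵥ (K τ *ᵥ z τ)) ⬝ᵥ (u τ + (B τ)ᵀ *ᵥ (K τ *ᵥ z τ)))))) :=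
  stmt_4_general n m t0 t1 h A Q B hB hQ K hKsymm hK x y z1 z2 u1 u2 h1 h2 v1 v2 hv1 hv2
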